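/- If, in addition, for each t > 0 the map x ↦ ∫ f(y) μ_t^x(dy) is continuous on ℝ^d, then the function u(x) = ∫_0^∞ (∫ f(y) μ_t^x(dy)) dt is continuous on ℝ^d. -/

import Mathlib

open MeasureTheory Set

/-!
Split `f` into its restriction to the ball of radius `R = 1 + t` and the tail. Since
`∫ f dμ = 0`, the integral of the bounded part against `μ_t^x` is bounded by `sup |f| ≈ R^β`
times `‖μ_t^x − μ‖`, which decays like `R^{-(k+1)}`; the tails are bounded by `R^{-2}` times the
moments of order `β + 2`, which grow polynomially in `x`. Choosing `k = β + 1` gives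
`|∫ f dμ_t^x| ≤ g(x) (1 + t)^{-2}` with `g` continuous, and dominated convergence makes `u`
continuous.
-/

/-- Total variation norm of the difference of two (finite) measures. -/
noncomputable def tvNorm {α : Type*} [MeasurableSpace α] (μ ν : Measure α) : ℝ :=
  (⨆ (E : Set α) (_ : MeasurableSet E), (μ E - ν E)).toReal +
  (⨆ (E : Set α) (_ : MeasurableSet E), (ν E - μ E)).toReal

section TotalVariation

variable {α : Type*} [MeasurableSpace α]

lemma abs_integral_sub_integral_le_of_le {a b : Measure α} [IsFiniteMeasure a]
    [IsFiniteMeasure b] (hba : b ≤ a) {g : α → ℝ} (hg : Measurable g) {M : ℝ}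
    (hgM : ∀ y, |g y| ≤ M) :
    |∫ y, g y ∂a - ∫ y, g y ∂b| ≤ M * (a univ - b univ).toReal := by
  have hint : ∀ (ν : Measure α) [IsFiniteMeasure ν], Integrable g ν := fun ν _ =>
    .of_bound hg.aestronglyMeasurable M (.of_forall hgM)
  rw [← Measure.sub_add_cancel_of_le hba, integral_add_measure (hint _) (hint _),
    add_sub_cancel_right, Measure.sub_add_cancel_of_le hba,
    ← Measure.sub_apply .univ hba]
  exact norm_integral_le_of_norm_le_const
    (.of_forall fun y => (Real.norm_eq_abs (g y)).trans_le (hgM y))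

lemma toReal_sub_le_toReal_iSup_sub (p q : Measure α) [IsFiniteMeasure p] {A : Set α}
    (hA : MeasurableSet A) :
    (p A - q A).toReal ≤ (⨆ (E : Set α) (_ : MeasurableSet E), (p E - q E)).toReal :=
  ENNReal.toReal_mono
    (ne_top_of_le_ne_top (measure_ne_top p univ)
      (iSup₂_le fun E _ => tsub_le_self.trans (measure_mono (subset_univ E))))
    (le_iSup₂ (f := fun E (_ : MeasurableSet E) => p E - q E) A hA)

lemma abs_integral_sub_integral_le_mul_tvNorm (p q : Measure α) [IsFiniteMeasure p]
    [IsFiniteMeasure q] {g : α → ℝ} (hg : Measurable g) {M : ℝ} (hM : 0 ≤ M)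
    (hgM : ∀ y, |g y| ≤ M) :
    |∫ y, g y ∂p - ∫ y, g y ∂q| ≤ M * tvNorm p q := by
  obtain ⟨A, hA, hqp, hpq⟩ := exists_isHahnDecomposition q p
  have hsplit : ∀ (ν : Measure α) [IsFiniteMeasure ν],
      ∫ y, g y ∂ν = ∫ y in A, g y ∂ν + ∫ y in Aᶜ, g y ∂ν := fun ν _ =>
    (integral_add_compl hA (.of_bound hg.aestronglyMeasurable M (.of_forall hgM))).symm
  have hA_le := abs_integral_sub_integral_le_of_le hqp hg hgM
  have hAc_le := abs_integral_sub_integral_le_of_le hpq hg hgM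
  rw [Measure.restrict_apply_univ, Measure.restrict_apply_univ] at hA_le hAc_le
  calc |∫ y, g y ∂p - ∫ y, g y ∂q|
      = |(∫ y in A, g y ∂p - ∫ y in A, g y ∂q) - (∫ y in Aᶜ, g y ∂q - ∫ y in Aᶜ, g y ∂p)| := by
        rw [hsplit p, hsplit q]; ring_nf
    _ ≤ M * (p A - q A).toReal + M * (q Aᶜ - p Aᶜ).toReal :=
        (abs_sub _ _).trans (add_le_add hA_le hAc_le)
    _ ≤ M * tvNorm p q := by
        rw [tvNorm, mul_add]
        exact add_le_add (mul_le_mul_of_nonneg_left (toReal_sub_le_toReal_iSup_sub p q hA) hM)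
          (mul_le_mul_of_nonneg_left (toReal_sub_le_toReal_iSup_sub q p hA.compl) hM)

end TotalVariation

section Truncation

open Metric

variable {E : Type*} [NormedAddCommGroup E] {f : E → ℝ} {Cf β R : ℝ}

lemma abs_indicator_closedBall_le (hCf : 0 ≤ Cf) (hβ : 0 ≤ β) (hR : 1 ≤ R)
    (hfb : ∀ y, |f y| ≤ Cf * (1 + ‖y‖ ^ β)) (y : E) :
    |(closedBall 0 R).indicator f y| ≤ 2 * Cf * R ^ β := by
  have hRβ : 1 ≤ R ^ β := Real.one_le_rpow hR hβ
  by_cases hy : y ∈ closedBall (0 : E) R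
  · have hyβ : ‖y‖ ^ β ≤ R ^ β :=
      Real.rpow_le_rpow (norm_nonneg y) (mem_closedBall_zero_iff.1 hy) hβ
    rw [indicator_of_mem hy]
    calc |f y| ≤ Cf * (1 + ‖y‖ ^ β) := hfb y
      _ ≤ Cf * (2 * R ^ β) := by gcongr; linarith
      _ = 2 * Cf * R ^ β := by ring
  · rw [indicator_of_notMem hy, abs_zero]
    positivity

lemma abs_sub_indicator_closedBall_le (hCf : 0 ≤ Cf) (hβ : 0 ≤ β) (hR : 1 ≤ R)
    (hfb : ∀ y, |f y| ≤ Cf * (1 + ‖y‖ ^ β)) (y : E) :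
    |f y - (closedBall 0 R).indicator f y| ≤ 2 * Cf * R ^ (-2 : ℝ) * ‖y‖ ^ (β + 2) := by
  by_cases hy : y ∈ closedBall (0 : E) R
  · rw [indicator_of_mem hy, sub_self, abs_zero]
    positivity
  · have hRy : R < ‖y‖ := by simpa using hy
    have hy0 : 0 < ‖y‖ := by linarith
    have hyβ : 1 ≤ ‖y‖ ^ β := Real.one_le_rpow (by linarith) hβ
    have hdecay : ‖y‖ ^ (-2 : ℝ) ≤ R ^ (-2 : ℝ) :=
      Real.rpow_le_rpow_of_nonpos (by linarith) hRy.le (by norm_num)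
    have hsplit : ‖y‖ ^ β = ‖y‖ ^ (-2 : ℝ) * ‖y‖ ^ (β + 2) := by
      rw [← Real.rpow_add hy0]; ring_nf
    rw [indicator_of_notMem hy, sub_zero]
    calc |f y| ≤ Cf * (1 + ‖y‖ ^ β) := hfb y
      _ ≤ 2 * Cf * (‖y‖ ^ (-2 : ℝ) * ‖y‖ ^ (β + 2)) := by rw [← hsplit]; nlinarith
      _ ≤ 2 * Cf * (R ^ (-2 : ℝ) * ‖y‖ ^ (β + 2)) := by gcongr
      _ = 2 * Cf * R ^ (-2 : ℝ) * ‖y‖ ^ (β + 2) := by ring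

variable [MeasurableSpace E] {ν : Measure E}

lemma integrable_sub_indicator_closedBall [OpensMeasurableSpace E] (hCf : 0 ≤ Cf)
    (hβ : 0 ≤ β) (hR : 1 ≤ R) (hf : Measurable f) (hfb : ∀ y, |f y| ≤ Cf * (1 + ‖y‖ ^ β))
    (hν : Integrable (fun y => ‖y‖ ^ (β + 2)) ν) :
    Integrable (fun y => f y - (closedBall 0 R).indicator f y) ν :=
  (hν.const_mul _).mono' (hf.sub (hf.indicator measurableSet_closedBall)).aestronglyMeasurable
    (.of_forall fun y =>
      (Real.norm_eq_abs _).trans_le (abs_sub_indicator_closedBall_le hCf hβ hR hfb y))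

lemma abs_integral_sub_indicator_closedBall_le (hCf : 0 ≤ Cf) (hβ : 0 ≤ β) (hR : 1 ≤ R)
    (hfb : ∀ y, |f y| ≤ Cf * (1 + ‖y‖ ^ β)) (hν : Integrable (fun y => ‖y‖ ^ (β + 2)) ν) :
    |∫ y, (f y - (closedBall 0 R).indicator f y) ∂ν| ≤
      2 * Cf * R ^ (-2 : ℝ) * ∫ y, ‖y‖ ^ (β + 2) ∂ν := by
  rw [← integral_const_mul]
  exact norm_integral_le_of_norm_le (hν.const_mul _)
    (.of_forall fun y =>
      (Real.norm_eq_abs _).trans_le (abs_sub_indicator_closedBall_le hCf hβ hR hfb y))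

lemma abs_integral_le_tvNorm_add_moments [OpensMeasurableSpace E] {μ : Measure E}
    [IsFiniteMeasure ν] [IsFiniteMeasure μ]
    (hCf : 0 ≤ Cf) (hβ : 0 ≤ β) (hR : 1 ≤ R) (hf : Measurable f)
    (hfb : ∀ y, |f y| ≤ Cf * (1 + ‖y‖ ^ β)) (hfμ : ∫ y, f y ∂μ = 0)
    (hν : Integrable (fun y => ‖y‖ ^ (β + 2)) ν) (hμ : Integrable (fun y => ‖y‖ ^ (β + 2)) μ) :
    |∫ y, f y ∂ν| ≤ 2 * Cf * R ^ β * tvNorm ν μ +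
      2 * Cf * R ^ (-2 : ℝ) * (∫ y, ‖y‖ ^ (β + 2) ∂ν + ∫ y, ‖y‖ ^ (β + 2) ∂μ) := by
  set g := (closedBall (0 : E) R).indicator f
  have hg : Measurable g := hf.indicator measurableSet_closedBall
  have hgb := abs_indicator_closedBall_le hCf hβ hR hfb
  have hsplit : ∀ (ρ : Measure E) [IsFiniteMeasure ρ], Integrable (fun y => ‖y‖ ^ (β + 2)) ρ →
      ∫ y, f y ∂ρ = ∫ y, g y ∂ρ + ∫ y, (f y - g y) ∂ρ := fun ρ _ hρ => by
    rw [← integral_add (.of_bound hg.aestronglyMeasurable _ (.of_forall hgb))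
      (integrable_sub_indicator_closedBall hCf hβ hR hf hfb hρ)]
    simp only [g, add_sub_cancel]
  have hbdd := abs_integral_sub_integral_le_mul_tvNorm ν μ hg (by positivity) hgb
  have htailν : |∫ y, (f y - g y) ∂ν| ≤ 2 * Cf * R ^ (-2 : ℝ) * ∫ y, ‖y‖ ^ (β + 2) ∂ν :=
    abs_integral_sub_indicator_closedBall_le hCf hβ hR hfb hν
  have htailμ : |∫ y, (f y - g y) ∂μ| ≤ 2 * Cf * R ^ (-2 : ℝ) * ∫ y, ‖y‖ ^ (β + 2) ∂μ :=
    abs_integral_sub_indicator_closedBall_le hCf hβ hR hfb hμ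
  calc |∫ y, f y ∂ν|
      = |(∫ y, g y ∂ν - ∫ y, g y ∂μ) + ∫ y, (f y - g y) ∂ν - ∫ y, (f y - g y) ∂μ| := by
        congr 1; linarith [hsplit ν hν, hsplit μ hμ]
    _ ≤ |∫ y, g y ∂ν - ∫ y, g y ∂μ| + |∫ y, (f y - g y) ∂ν| + |∫ y, (f y - g y) ∂μ| :=
        (abs_sub _ _).trans (by gcongr; exact abs_add_le _ _)
    _ ≤ _ := by linarith

lemma abs_integral_le_mul_one_add_rpow_neg_two [OpensMeasurableSpace E] {μ : Measure E}
    [IsFiniteMeasure ν] [IsFiniteMeasure μ] (hCf : 0 ≤ Cf) (hβ : 0 ≤ β) (hf : Measurable f)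
    (hfb : ∀ y, |f y| ≤ Cf * (1 + ‖y‖ ^ β)) (hfμ : ∫ y, f y ∂μ = 0) {t A B : ℝ} (ht : 0 ≤ t)
    (hν : Integrable (fun y => ‖y‖ ^ (β + 2)) ν) (hμ : Integrable (fun y => ‖y‖ ^ (β + 2)) μ)
    (htv : tvNorm ν μ ≤ A * (1 + t) ^ (-(β + 1 + 1))) (hmom : ∫ y, ‖y‖ ^ (β + 2) ∂ν ≤ B) :
    |∫ y, f y ∂ν| ≤ 2 * Cf * (A + B + ∫ y, ‖y‖ ^ (β + 2) ∂μ) * (1 + t) ^ (-2 : ℝ) := by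
  have hR : (1 : ℝ) ≤ 1 + t := by linarith
  have hRpos : (0 : ℝ) < 1 + t := by linarith
  have hpow : (1 + t) ^ β * (1 + t) ^ (-(β + 1 + 1)) = (1 + t) ^ (-2 : ℝ) := by
    rw [← Real.rpow_add hRpos]; ring_nf
  have hbdd : 2 * Cf * (1 + t) ^ β * tvNorm ν μ ≤ 2 * Cf * A * (1 + t) ^ (-2 : ℝ) := by
    calc 2 * Cf * (1 + t) ^ β * tvNorm ν μ
        ≤ 2 * Cf * (1 + t) ^ β * (A * (1 + t) ^ (-(β + 1 + 1))) := by gcongr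
      _ = 2 * Cf * A * (1 + t) ^ (-2 : ℝ) := by rw [← hpow]; ring
  have htail : 2 * Cf * (1 + t) ^ (-2 : ℝ) * ∫ y, ‖y‖ ^ (β + 2) ∂ν ≤
      2 * Cf * (1 + t) ^ (-2 : ℝ) * B := by gcongr
  calc |∫ y, f y ∂ν|
      ≤ 2 * Cf * (1 + t) ^ β * tvNorm ν μ + 2 * Cf * (1 + t) ^ (-2 : ℝ) *
          (∫ y, ‖y‖ ^ (β + 2) ∂ν + ∫ y, ‖y‖ ^ (β + 2) ∂μ) :=
        abs_integral_le_tvNorm_add_moments hCf hβ hR hf hfb hfμ hν hμ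
    _ ≤ _ := by linarith

end Truncation

lemma integrable_and_integral_le_of_lintegral_ofReal_le {α : Type*} [MeasurableSpace α]
    {ν : Measure α} {φ : α → ℝ} (hφ : ∀ y, 0 ≤ φ y) (hφm : AEStronglyMeasurable φ ν) {c : ℝ}
    (hc : 0 ≤ c) (h : ∫⁻ y, ENNReal.ofReal (φ y) ∂ν ≤ ENNReal.ofReal c) :
    Integrable φ ν ∧ ∫ y, φ y ∂ν ≤ c :=
  ⟨(lintegral_ofReal_ne_top_iff_integrable hφm (.of_forall hφ)).1
      (ne_top_of_le_ne_top ENNReal.ofReal_ne_top h),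
    (integral_eq_lintegral_of_nonneg_ae (.of_forall hφ) hφm).trans_le
      (ENNReal.toReal_le_of_le_ofReal hc h)⟩

lemma aestronglyMeasurable_integral_restrict {α β : Type*} [MeasurableSpace α]
    [MeasurableSpace β] {ν : Measure α} {s : Set α} (hs : MeasurableSet s) {P : α → Measure β}
    (hPm : Measurable P) (hP : ∀ a ∈ s, IsProbabilityMeasure (P a)) {f : β → ℝ}
    (hf : Measurable f) :
    AEStronglyMeasurable (fun a => ∫ y, f y ∂P a) (ν.restrict s) := by
  classical
  -- `P` need not be a kernel off `s`; replace it there by the zero measure.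
  let κ : ProbabilityTheory.Kernel α β := ⟨s.piecewise P 0, hPm.piecewise hs measurable_const⟩
  have : ProbabilityTheory.IsFiniteKernel κ := by
    refine ⟨⟨1, ENNReal.one_lt_top, fun a => ?_⟩⟩
    by_cases ha : a ∈ s
    · have := hP a ha
      simp [κ, ha]
    · simp [κ, ha]
  refine (StronglyMeasurable.integral_kernel_prod_right (κ := κ) (f := fun _ y => f y)
    (hf.comp measurable_snd).stronglyMeasurable).aestronglyMeasurable.congr ?_
  exact ae_restrict_of_forall_mem hs fun a ha => by simp [κ, ha]

lemma continuous_integral_of_abs_le_mul {X α : Type*} [TopologicalSpace X]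
    [FirstCountableTopology X] [MeasurableSpace α]
    {ν : Measure α} {F : X → α → ℝ} {g : X → ℝ} {b : α → ℝ}
    (hFm : ∀ x, AEStronglyMeasurable (F x) ν) (hg : Continuous g) (hb : Integrable b ν)
    (hb0 : ∀ a, 0 ≤ b a) (hFb : ∀ x, ∀ᵐ a ∂ν, |F x a| ≤ g x * b a)
    (hFc : ∀ᵐ a ∂ν, Continuous fun x => F x a) :
    Continuous fun x => ∫ a, F x a ∂ν := by
  refine continuous_iff_continuousAt.2 fun x₀ => continuousAt_of_dominated
    (bound := fun a => (g x₀ + 1) * b a) (.of_forall hFm) ?_ (hb.const_mul _)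
    (hFc.mono fun a ha => ha.continuousAt)
  filter_upwards [hg.continuousAt.eventually_lt continuousAt_const (lt_add_one (g x₀))]
    with x hx
  filter_upwards [hFb x] with a ha
  exact ha.trans (by gcongr; exact hb0 a)

theorem stmt6_general
    (d : ℕ)
    (P : ℝ → EuclideanSpace ℝ (Fin d) → Measure (EuclideanSpace ℝ (Fin d)))
    (μ : Measure (EuclideanSpace ℝ (Fin d)))
    (hP : ∀ t x, 0 ≤ t → IsProbabilityMeasure (P t x))
    (hμ : IsProbabilityMeasure μ)
    (hmeas : ∀ E : Set (EuclideanSpace ℝ (Fin d)), MeasurableSet E →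
      Measurable (fun p : ℝ × EuclideanSpace ℝ (Fin d) => P p.1 p.2 E))
    (hP1 : ∀ m m' : ℝ, 0 < m → m + 2 < m' → ∃ C : ℝ, ∀ t x, 0 ≤ t →
      ∫⁻ y, ENNReal.ofReal (‖y‖ ^ m) ∂(P t x) ≤ ENNReal.ofReal (C * (1 + ‖x‖ ^ m')))
    (hP2 : ∀ m : ℝ, 0 < m → ∫⁻ y, ENNReal.ofReal (‖y‖ ^ m) ∂μ < ⊤)
    (hP3 : ∀ k m : ℝ, 0 < k → 2 * k + 2 < m → ∃ C : ℝ, ∀ t x, 0 ≤ t →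
      tvNorm (P t x) μ ≤ C * (1 + ‖x‖ ^ m) * (1 + t) ^ (-(k + 1)))
    (β Cf : ℝ) (hβ : 0 ≤ β) (hCf : 1 ≤ Cf)
    (f : EuclideanSpace ℝ (Fin d) → ℝ) (hf : Measurable f)
    (hfb : ∀ y, |f y| ≤ Cf * (1 + ‖y‖ ^ β))
    (hfμ : ∫ y, f y ∂μ = 0)
    (hcont : ∀ t : ℝ, 0 < t → Continuous fun x => ∫ y, f y ∂(P t x)) :
    Continuous fun x => ∫ t in Ioi (0 : ℝ), ∫ y, f y ∂(P t x) := by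
  obtain ⟨C1, hC1⟩ := hP1 (β + 2) (β + 5) (by linarith) (by linarith)
  obtain ⟨C3, hC3⟩ := hP3 (β + 1) (2 * β + 5) (by linarith) (by linarith)
  have hmom_meas : Measurable fun y : EuclideanSpace ℝ (Fin d) => ‖y‖ ^ (β + 2) := by fun_prop
  have hμmom : Integrable (fun y => ‖y‖ ^ (β + 2)) μ :=
    (lintegral_ofReal_ne_top_iff_integrable hmom_meas.aestronglyMeasurable
      (.of_forall fun y => by positivity)).1 (hP2 _ (by linarith)).ne
  refine continuous_integral_of_abs_le_mul
    (g := fun x => 2 * Cf * (C3 * (1 + ‖x‖ ^ (2 * β + 5)) + |C1| * (1 + ‖x‖ ^ (β + 5)) +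
      ∫ y, ‖y‖ ^ (β + 2) ∂μ))
    (b := fun t => (1 + ‖t‖) ^ (-2 : ℝ)) (fun x => ?_) ?_
    (integrable_one_add_norm (by norm_num)).restrict (fun t => by positivity)
    (fun x => ae_restrict_of_forall_mem measurableSet_Ioi fun t ht => ?_)
    (ae_restrict_of_forall_mem measurableSet_Ioi hcont)
  · exact aestronglyMeasurable_integral_restrict measurableSet_Ioi
      (Measure.measurable_of_measurable_coe _ fun E hE =>
        (hmeas E hE).comp (measurable_id.prodMk measurable_const))
      (fun t ht => hP t x (le_of_lt ht)) hf
  · fun_prop (disch := linarith)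
  · have ht0 : 0 ≤ t := le_of_lt ht
    have := hP t x ht0
    obtain ⟨hνmom, hνle⟩ := integrable_and_integral_le_of_lintegral_ofReal_le
      (c := |C1| * (1 + ‖x‖ ^ (β + 5))) (fun y => by positivity)
      hmom_meas.aestronglyMeasurable (by positivity)
      ((hC1 t x ht0).trans (ENNReal.ofReal_le_ofReal (by gcongr; exact le_abs_self C1)))
    rw [Real.norm_of_nonneg ht0]
    exact abs_integral_le_mul_one_add_rpow_neg_two (by linarith) hβ hf hfb hfμ ht0 hνmom hμmom
      (hC3 t x ht0) hνle

/-- if in addition for each `t > 0` the map `x ↦ ∫ f dμ_t^x` is continuous,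
then `u(x) = ∫_0^∞ (∫ f dμ_t^x) dt` is continuous on `ℝ^d`. -/
theorem stmt6
    (d : ℕ) (hd : 1 ≤ d)
    (P : ℝ → EuclideanSpace ℝ (Fin d) → Measure (EuclideanSpace ℝ (Fin d)))
    (μ : Measure (EuclideanSpace ℝ (Fin d)))
    (hP : ∀ t x, 0 ≤ t → IsProbabilityMeasure (P t x))
    (hμ : IsProbabilityMeasure μ)
    (hmeas : ∀ E : Set (EuclideanSpace ℝ (Fin d)), MeasurableSet E →
      Measurable (fun p : ℝ × EuclideanSpace ℝ (Fin d) => P p.1 p.2 E))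
    (hP1 : ∀ m m' : ℝ, 0 < m → m + 2 < m' → ∃ C : ℝ, ∀ t x, 0 ≤ t →
      ∫⁻ y, ENNReal.ofReal (‖y‖ ^ m) ∂(P t x) ≤ ENNReal.ofReal (C * (1 + ‖x‖ ^ m')))
    (hP2 : ∀ m : ℝ, 0 < m → ∫⁻ y, ENNReal.ofReal (‖y‖ ^ m) ∂μ < ⊤)
    (hP3 : ∀ k m : ℝ, 0 < k → 2 * k + 2 < m → ∃ C : ℝ, ∀ t x, 0 ≤ t →
      tvNorm (P t x) μ ≤ C * (1 + ‖x‖ ^ m) * (1 + t) ^ (-(k + 1)))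
    (β Cf : ℝ) (hβ : 0 ≤ β) (hCf : 1 ≤ Cf)
    (f : EuclideanSpace ℝ (Fin d) → ℝ) (hf : Measurable f)
    (hfb : ∀ y, |f y| ≤ Cf * (1 + ‖y‖ ^ β))
    (hfμ : ∫ y, f y ∂μ = 0)
    (hcont : ∀ t : ℝ, 0 < t → Continuous fun x => ∫ y, f y ∂(P t x)) :
    Continuous fun x => ∫ t in Ioi (0 : ℝ), ∫ y, f y ∂(P t x) :=
  stmt6_general d P μ hP hμ hmeas hP1 hP2 hP3 β Cf hβ hCf f hf hfb hfμ hcont
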